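/- Let u₀ ∈ S_μ ∩ B(0, R−1) with R > 1, δ₀ = min(1, √μ), u ∈ S_μ with ‖u−u₀‖ < δ₀, v = exp_{u₀}^{-1}(u), σ(t) = exp_{u₀}(tv), and let φ solve φ'(t) + (φ(t), σ'(t))Gσ(t)/‖Gσ(t)‖² = 0 with φ(0) = w₀ ∈ T_{u₀}S_μ. Then ‖φ(1) − w₀‖ ≤ C(R,μ)·|v|·‖w₀‖, where C(R,μ) = (1/μ)(R + (R−1)/√μ). -/

import Mathlib

open scoped RealInnerProductSpace Classical

/-- `sinc x = sin x / x`, with `sinc 0 = 1`. -/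
noncomputable def sinc (x : ℝ) : ℝ := if x = 0 then 1 else Real.sin x / x

/-- The explicit inverse of the exponential map of the spray `F₁`. -/
noncomputable def expinv {E H : Type*} [NormedAddCommGroup E] [InnerProductSpace ℝ E]
    [NormedAddCommGroup H] [InnerProductSpace ℝ H]
    (ι : E →L[ℝ] H) (μ : ℝ) (u₀ u : E) : E :=
  (Real.arccos (⟪ι u, ι u₀⟫ / μ) / Real.sqrt (1 - (⟪ι u, ι u₀⟫ / μ) ^ 2)) •
    (u - (⟪ι u, ι u₀⟫ / μ) • u₀)

/-!
The geodesic `σ` stays on the sphere `‖ι σ‖² = μ` and has constant speed `‖ι σ'‖ = ‖ι v‖`.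
Along the transport equation `(σ, φ)` is conserved, hence zero, and then so is `⟪φ, φ⟫`:
`‖φ t‖ = ‖w₀‖`. As `⟪G σ, σ⟫ = ‖ι σ‖² = μ`, `‖G σ‖ ≥ μ / ‖σ‖`, whence
`‖φ'‖ ≤ ‖σ‖ ‖ι v‖ ‖w₀‖ / μ`. Writing
`σ t = cos (θ t) u₀ + (sin (θ t) / sin θ) ((u - u₀) + (1 - β) u₀)` with
`β = cos θ = (u, u₀) / μ = 1 - |u - u₀|² / 2μ`, the hypothesis `‖u - u₀‖ < min 1 √μ` gives
`β ≥ 1/2` and `(1 - β) √μ ≤ 1`, which bounds `‖σ‖` by `R + (R - 1) / √μ`; the mean value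
inequality concludes.
-/

open Set

lemma mul_sinc (x : ℝ) : x * sinc x = Real.sin x := by
  by_cases hx : x = 0
  · simp [hx]
  · rw [sinc, if_neg hx]
    field_simp

lemma hasDerivAt_mul_sinc_mul (ω t : ℝ) :
    HasDerivAt (fun s ↦ s * sinc (ω * s)) (Real.cos (ω * t)) t := by
  rcases eq_or_ne ω 0 with rfl | hω
  · simpa [sinc] using hasDerivAt_id' t
  · have h : (fun s ↦ s * sinc (ω * s)) = fun s ↦ Real.sin (ω * s) / ω := by
      funext s
      rw [← mul_sinc, eq_div_iff hω]
      ring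
    rw [h]
    simpa [mul_div_cancel_right₀ _ hω] using
      (((hasDerivAt_id t).const_mul ω).sin).div_const ω

lemma div_sqrt_sq_mul (x : ℝ) {μ : ℝ} (hμ : 0 < μ) : (x / √μ) ^ 2 * μ = x ^ 2 := by
  rw [div_pow, Real.sq_sqrt hμ.le, div_mul_cancel₀ _ hμ.ne']

lemma norm_smul_add_smul_sq {F : Type*} [NormedAddCommGroup F] [InnerProductSpace ℝ F]
    {x y : F} (h : ⟪x, y⟫ = 0) (a b : ℝ) :
    ‖a • x + b • y‖ ^ 2 = a ^ 2 * ‖x‖ ^ 2 + b ^ 2 * ‖y‖ ^ 2 := by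
  have h' : ⟪a • x, b • y⟫ = 0 := by rw [real_inner_smul_left, real_inner_smul_right, h]; ring
  rw [sq, norm_add_sq_eq_norm_sq_add_norm_sq_real h', norm_smul, norm_smul, Real.norm_eq_abs,
    Real.norm_eq_abs]
  linear_combination ‖x‖ ^ 2 * sq_abs a + ‖y‖ ^ 2 * sq_abs b

section SphereGeometry

variable {H : Type*} [NormedAddCommGroup H] [InnerProductSpace ℝ H] {μ : ℝ} {x y : H}

lemma one_sub_inner_div_eq (hμ : μ ≠ 0) (hx : ‖x‖ ^ 2 = μ) (hy : ‖y‖ ^ 2 = μ) :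
    1 - ⟪x, y⟫ / μ = ‖x - y‖ ^ 2 / (2 * μ) := by
  rw [norm_sub_sq_real, hx, hy]
  field_simp
  ring

lemma inner_div_nonneg_of_norm_sub_le (hμ : 0 < μ) (hx : ‖x‖ ^ 2 = μ) (hy : ‖y‖ ^ 2 = μ)
    (h : ‖x - y‖ ≤ √μ) : 0 ≤ ⟪x, y⟫ / μ := by
  have hd : ‖x - y‖ ^ 2 ≤ μ := by
    simpa [Real.sq_sqrt hμ.le] using pow_le_pow_left₀ (norm_nonneg _) h 2
  have h1 := one_sub_inner_div_eq hμ.ne' hx hy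
  have h2 : ‖x - y‖ ^ 2 / (2 * μ) ≤ 1 / 2 := by
    rw [div_le_iff₀ (by positivity)]
    linarith
  linarith

lemma one_sub_inner_div_mul_sqrt_le (hμ : 0 < μ) (hx : ‖x‖ ^ 2 = μ) (hy : ‖y‖ ^ 2 = μ)
    (h₁ : ‖x - y‖ ≤ 1) (h₂ : ‖x - y‖ ≤ √μ) : (1 - ⟪x, y⟫ / μ) * √μ ≤ 1 := by
  have hd : ‖x - y‖ ^ 2 * √μ ≤ μ := by
    have := norm_nonneg (x - y)
    calc ‖x - y‖ ^ 2 * √μ ≤ 1 * √μ * √μ := by gcongr; nlinarith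
      _ = μ := by rw [one_mul, Real.mul_self_sqrt hμ.le]
  rw [one_sub_inner_div_eq hμ.ne' hx hy, div_mul_eq_mul_div, div_le_one (by positivity)]
  linarith

end SphereGeometry

section Geodesic

variable {E H : Type*} [NormedAddCommGroup E] [InnerProductSpace ℝ E]
  [NormedAddCommGroup H] [InnerProductSpace ℝ H] (ι : E →L[ℝ] H) {μ : ℝ} {u₀ u v : E}

/-- `t ↦ exp_{u₀}(t v)` on the sphere `S_μ = {u | ‖ι u‖² = μ}`. -/
noncomputable def sphereGeodesic (μ : ℝ) (u₀ v : E) (t : ℝ) : E :=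
  Real.cos (‖ι v‖ / √μ * t) • u₀ + (t * sinc (‖ι v‖ / √μ * t)) • v

lemma sphereGeodesic_zero : sphereGeodesic ι μ u₀ v 0 = u₀ := by
  simp [sphereGeodesic]

lemma hasDerivAt_sphereGeodesic (t : ℝ) :
    HasDerivAt (sphereGeodesic ι μ u₀ v)
      ((-(‖ι v‖ / √μ * Real.sin (‖ι v‖ / √μ * t))) • u₀ + Real.cos (‖ι v‖ / √μ * t) • v) t := by
  set ω := ‖ι v‖ / √μ
  have hcos : HasDerivAt (fun s ↦ Real.cos (ω * s)) (-(ω * Real.sin (ω * t))) t := by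
    simpa [mul_comm] using ((hasDerivAt_id t).const_mul ω).cos
  exact (hcos.smul_const u₀).add ((hasDerivAt_mul_sinc_mul ω t).smul_const v)

lemma norm_sq_sphereGeodesic (hμ : 0 < μ) (hu₀ : ‖ι u₀‖ ^ 2 = μ) (horth : ⟪ι u₀, ι v⟫ = 0)
    (t : ℝ) : ‖ι (sphereGeodesic ι μ u₀ v t)‖ ^ 2 = μ := by
  set ω := ‖ι v‖ / √μ
  have hsin : (ω * (t * sinc (ω * t))) ^ 2 = Real.sin (ω * t) ^ 2 := by
    rw [← mul_assoc, mul_sinc]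
  rw [sphereGeodesic, map_add, map_smul, map_smul, norm_smul_add_smul_sq horth, hu₀,
    ← div_sqrt_sq_mul ‖ι v‖ hμ]
  linear_combination μ * hsin + μ * Real.cos_sq_add_sin_sq (ω * t)

lemma norm_sphereGeodesic_deriv (hμ : 0 < μ) (hu₀ : ‖ι u₀‖ ^ 2 = μ) (horth : ⟪ι u₀, ι v⟫ = 0)
    (t : ℝ) :
    ‖ι ((-(‖ι v‖ / √μ * Real.sin (‖ι v‖ / √μ * t))) • u₀ + Real.cos (‖ι v‖ / √μ * t) • v)‖ =
      ‖ι v‖ := by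
  set ω := ‖ι v‖ / √μ
  refine (sq_eq_sq₀ (norm_nonneg _) (norm_nonneg _)).1 ?_
  rw [map_add, map_smul, map_smul, norm_smul_add_smul_sq horth, hu₀,
    ← div_sqrt_sq_mul ‖ι v‖ hμ]
  linear_combination ω ^ 2 * μ * Real.sin_sq_add_cos_sq (ω * t)

lemma inner_expinv_eq_zero (hμ : μ ≠ 0) (hu₀ : ‖ι u₀‖ ^ 2 = μ) :
    ⟪ι u₀, ι (expinv ι μ u₀ u)⟫ = 0 := by
  rw [expinv, map_smul, map_sub, map_smul, real_inner_smul_right, inner_sub_right,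
    real_inner_smul_right, real_inner_self_eq_norm_sq, hu₀, div_mul_cancel₀ _ hμ,
    real_inner_comm, sub_self, mul_zero]

lemma norm_expinv (hμ : 0 < μ) (hu₀ : ‖ι u₀‖ ^ 2 = μ) (hu : ‖ι u‖ ^ 2 = μ)
    (hβ : -1 < ⟪ι u, ι u₀⟫ / μ) :
    ‖ι (expinv ι μ u₀ u)‖ = Real.arccos (⟪ι u, ι u₀⟫ / μ) * √μ := by
  rw [expinv]
  set β := ⟪ι u, ι u₀⟫ / μ with hβ_def
  have hinner : ⟪ι u, ι u₀⟫ = β * μ := by rw [hβ_def, div_mul_cancel₀ _ hμ.ne']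
  have hw : ‖ι (u - β • u₀)‖ = √μ * √(1 - β ^ 2) := by
    rw [← Real.sqrt_mul hμ.le, ← Real.sqrt_sq (norm_nonneg _), map_sub, map_smul,
      norm_sub_sq_real, real_inner_smul_right, norm_smul, mul_pow, Real.norm_eq_abs, sq_abs,
      hu, hu₀, hinner]
    ring_nf
  rw [map_smul, norm_smul, hw, Real.norm_eq_abs,
    abs_of_nonneg (div_nonneg (Real.arccos_nonneg _) (Real.sqrt_nonneg _))]
  rcases eq_or_ne √(1 - β ^ 2) 0 with h | h
  · have hβ1 : 1 ≤ β := by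
      rw [Real.sqrt_eq_zero'] at h
      nlinarith
    simp [Real.arccos_eq_zero.2 hβ1]
  · field_simp

lemma sphereGeodesic_expinv (hμ : 0 < μ) (hu₀ : ‖ι u₀‖ ^ 2 = μ) (hu : ‖ι u‖ ^ 2 = μ)
    (hβ : -1 < ⟪ι u, ι u₀⟫ / μ) (t : ℝ) :
    sphereGeodesic ι μ u₀ (expinv ι μ u₀ u) t =
      Real.cos (Real.arccos (⟪ι u, ι u₀⟫ / μ) * t) • u₀ +
        (Real.sin (Real.arccos (⟪ι u, ι u₀⟫ / μ) * t) /
          Real.sin (Real.arccos (⟪ι u, ι u₀⟫ / μ))) • (u - (⟪ι u, ι u₀⟫ / μ) • u₀) := by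
  have hω : ‖ι (expinv ι μ u₀ u)‖ / √μ = Real.arccos (⟪ι u, ι u₀⟫ / μ) := by
    rw [norm_expinv ι hμ hu₀ hu hβ, mul_div_cancel_right₀ _ (Real.sqrt_pos.2 hμ).ne']
  rw [sphereGeodesic, hω, expinv, smul_smul, Real.sin_arccos, ← mul_sinc]
  congr 2
  ring

lemma norm_sphereGeodesic_expinv_le (hμ : 0 < μ) (hu₀ : ‖ι u₀‖ ^ 2 = μ) (hu : ‖ι u‖ ^ 2 = μ)
    (hβ : 0 ≤ ⟪ι u, ι u₀⟫ / μ) {t : ℝ} (ht : t ∈ Icc 0 1) :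
    ‖sphereGeodesic ι μ u₀ (expinv ι μ u₀ u) t‖ ≤
      ‖u₀‖ + ‖u - u₀‖ + (1 - ⟪ι u, ι u₀⟫ / μ) * ‖u₀‖ := by
  rw [sphereGeodesic_expinv ι hμ hu₀ hu (by linarith) t]
  set β := ⟪ι u, ι u₀⟫ / μ with hβ_def
  set θ := Real.arccos β
  have hβ1 : β ≤ 1 := by
    have h := one_sub_inner_div_eq hμ.ne' hu hu₀
    rw [← hβ_def] at h
    have : 0 ≤ ‖ι u - ι u₀‖ ^ 2 / (2 * μ) := by positivity
    linarith
  have hθ0 : 0 ≤ θ := Real.arccos_nonneg β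
  have hθ : θ ≤ Real.pi / 2 := Real.arccos_le_pi_div_two.2 hβ
  have hθt0 : 0 ≤ θ * t := mul_nonneg hθ0 ht.1
  have hsinθ : 0 ≤ Real.sin θ := Real.sin_nonneg_of_nonneg_of_le_pi hθ0 (by linarith [Real.pi_pos])
  have hs0 : 0 ≤ Real.sin (θ * t) / Real.sin θ :=
    div_nonneg (Real.sin_nonneg_of_nonneg_of_le_pi hθt0 (by nlinarith [Real.pi_pos, ht.2])) hsinθ
  have hs1 : Real.sin (θ * t) / Real.sin θ ≤ 1 :=
    div_le_one_of_le₀ (Real.sin_le_sin_of_le_of_le_pi_div_two (by linarith [Real.pi_pos]) hθ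
      (mul_le_of_le_one_right hθ0 ht.2)) hsinθ
  have hcos : ‖Real.cos (θ * t) • u₀‖ ≤ ‖u₀‖ := by
    rw [norm_smul, Real.norm_eq_abs]
    exact mul_le_of_le_one_left (norm_nonneg _) (Real.abs_cos_le_one _)
  have hchord : ‖(Real.sin (θ * t) / Real.sin θ) • (u - β • u₀)‖ ≤ ‖u - u₀‖ + (1 - β) * ‖u₀‖ := by
    rw [norm_smul, Real.norm_eq_abs, abs_of_nonneg hs0,
      show u - β • u₀ = (u - u₀) + (1 - β) • u₀ by module]
    refine (mul_le_of_le_one_left (norm_nonneg _) hs1).trans ((norm_add_le _ _).trans_eq ?_)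
    rw [norm_smul, Real.norm_eq_abs, abs_of_nonneg (sub_nonneg.2 hβ1)]
  linarith [norm_add_le (Real.cos (θ * t) • u₀) ((Real.sin (θ * t) / Real.sin θ) • (u - β • u₀))]

end Geodesic

lemma eq_left_of_hasDerivAt_zero {F : Type*} [NormedAddCommGroup F] [NormedSpace ℝ F]
    {f : ℝ → F} {a b : ℝ} (hf : ∀ t ∈ Icc a b, HasDerivAt f 0 t) :
    ∀ t ∈ Icc a b, f t = f a :=
  constant_of_has_deriv_right_zero (fun t ht ↦ (hf t ht).continuousAt.continuousWithinAt)
    fun t ht ↦ (hf t (Ico_subset_Icc_self ht)).hasDerivWithinAt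

section ParallelTransport

variable {E H : Type*} [NormedAddCommGroup E] [InnerProductSpace ℝ E]
  [NormedAddCommGroup H] [InnerProductSpace ℝ H] {ι : E →L[ℝ] H} {G : E →ₗ[ℝ] E} {μ : ℝ}

lemma sq_norm_le_norm_map_mul_norm (hG : ∀ a h : E, ⟪ι a, ι h⟫ = ⟪G a, h⟫) (a : E) :
    ‖ι a‖ ^ 2 ≤ ‖G a‖ * ‖a‖ := by
  rw [← real_inner_self_eq_norm_sq, hG]
  exact real_inner_le_norm _ _

lemma norm_map_pos (hG : ∀ a h : E, ⟪ι a, ι h⟫ = ⟪G a, h⟫) (hμ : 0 < μ) {s : E}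
    (hs : ‖ι s‖ ^ 2 = μ) : 0 < ‖G s‖ := by
  have h := sq_norm_le_norm_map_mul_norm hG s
  rw [hs] at h
  exact pos_of_mul_pos_left (hμ.trans_le h) (norm_nonneg s)

lemma norm_transport_velocity_le (hι1 : ‖ι‖ ≤ 1) (hG : ∀ a h : E, ⟪ι a, ι h⟫ = ⟪G a, h⟫)
    (hμ : 0 < μ) {s s' p p' : E} (hs : ‖ι s‖ ^ 2 = μ)
    (h : p' + (⟪ι p, ι s'⟫ / ‖G s‖ ^ 2) • G s = 0) :
    ‖p'‖ ≤ ‖s‖ / μ * ‖ι s'‖ * ‖p‖ := by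
  have hGs := sq_norm_le_norm_map_mul_norm hG s
  rw [hs] at hGs
  have hGpos := norm_map_pos hG hμ hs
  have hinner : |⟪ι p, ι s'⟫| ≤ ‖p‖ * ‖ι s'‖ :=
    (abs_real_inner_le_norm _ _).trans
      (mul_le_mul_of_nonneg_right (by simpa using ι.le_of_opNorm_le hι1 p) (norm_nonneg _))
  rw [eq_neg_of_add_eq_zero_left h, norm_neg, norm_smul, Real.norm_eq_abs, abs_div,
    abs_of_nonneg (sq_nonneg ‖G s‖), pow_two, div_mul_eq_mul_div, mul_div_mul_right _ _ hGpos.ne',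
    div_le_iff₀ hGpos]
  calc |⟪ι p, ι s'⟫| ≤ ‖p‖ * ‖ι s'‖ / μ * μ := by rwa [div_mul_cancel₀ _ hμ.ne']
    _ ≤ ‖p‖ * ‖ι s'‖ / μ * (‖G s‖ * ‖s‖) := by gcongr
    _ = ‖s‖ / μ * ‖ι s'‖ * ‖p‖ * ‖G s‖ := by ring

variable {σ σ' φ φ' : ℝ → E} {a b : ℝ}

lemma inner_transport_eq (hG : ∀ a h : E, ⟪ι a, ι h⟫ = ⟪G a, h⟫)
    (hdσ : ∀ t ∈ Icc a b, HasDerivAt σ (σ' t) t) (hdφ : ∀ t ∈ Icc a b, HasDerivAt φ (φ' t) t)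
    (hode : ∀ t ∈ Icc a b, φ' t + (⟪ι (φ t), ι (σ' t)⟫ / ‖G (σ t)‖ ^ 2) • G (σ t) = 0)
    (hGσ : ∀ t ∈ Icc a b, G (σ t) ≠ 0) :
    ∀ t ∈ Icc a b, ⟪ι (σ t), ι (φ t)⟫ = ⟪ι (σ a), ι (φ a)⟫ := by
  refine eq_left_of_hasDerivAt_zero fun t ht ↦ ?_
  refine ((ι.hasFDerivAt.comp_hasDerivAt t (hdσ t ht)).inner ℝ
    (ι.hasFDerivAt.comp_hasDerivAt t (hdφ t ht))).congr_deriv ?_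
  have hGG : ⟪ι (σ t), ι (G (σ t))⟫ = ‖G (σ t)‖ ^ 2 := by
    rw [hG, real_inner_self_eq_norm_sq]
  rw [Function.comp_apply, Function.comp_apply, eq_neg_of_add_eq_zero_left (hode t ht), map_neg,
    map_smul, inner_neg_right, real_inner_smul_right, hGG,
    div_mul_cancel₀ _ (by simpa using hGσ t ht), real_inner_comm]
  simp

lemma norm_transport_eq (hG : ∀ a h : E, ⟪ι a, ι h⟫ = ⟪G a, h⟫)
    (hdσ : ∀ t ∈ Icc a b, HasDerivAt σ (σ' t) t) (hdφ : ∀ t ∈ Icc a b, HasDerivAt φ (φ' t) t)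
    (hode : ∀ t ∈ Icc a b, φ' t + (⟪ι (φ t), ι (σ' t)⟫ / ‖G (σ t)‖ ^ 2) • G (σ t) = 0)
    (hGσ : ∀ t ∈ Icc a b, G (σ t) ≠ 0) (htan : ⟪ι (σ a), ι (φ a)⟫ = 0) :
    ∀ t ∈ Icc a b, ‖φ t‖ = ‖φ a‖ := by
  have hsq : ∀ t ∈ Icc a b, ‖φ t‖ ^ 2 = ‖φ a‖ ^ 2 := by
    refine eq_left_of_hasDerivAt_zero fun t ht ↦ ?_
    refine (hdφ t ht).norm_sq.congr_deriv ?_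
    have horth : ⟪φ t, G (σ t)⟫ = 0 := by
      rw [real_inner_comm, ← hG, inner_transport_eq hG hdσ hdφ hode hGσ t ht, htan]
    rw [eq_neg_of_add_eq_zero_left (hode t ht), inner_neg_right, real_inner_smul_right, horth]
    simp
  exact fun t ht ↦ (sq_eq_sq₀ (norm_nonneg _) (norm_nonneg _)).1 (hsq t ht)

theorem norm_sub_le_of_transport (hι1 : ‖ι‖ ≤ 1) (hG : ∀ a h : E, ⟪ι a, ι h⟫ = ⟪G a, h⟫)
    (hμ : 0 < μ) {L B : ℝ}
    (hdσ : ∀ t ∈ Icc a b, HasDerivAt σ (σ' t) t) (hdφ : ∀ t ∈ Icc a b, HasDerivAt φ (φ' t) t)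
    (hode : ∀ t ∈ Icc a b, φ' t + (⟪ι (φ t), ι (σ' t)⟫ / ‖G (σ t)‖ ^ 2) • G (σ t) = 0)
    (hsphere : ∀ t ∈ Icc a b, ‖ι (σ t)‖ ^ 2 = μ) (htan : ⟪ι (σ a), ι (φ a)⟫ = 0)
    (hL : ∀ t ∈ Icc a b, ‖ι (σ' t)‖ ≤ L) (hB : ∀ t ∈ Icc a b, ‖σ t‖ ≤ B) :
    ∀ t ∈ Icc a b, ‖φ t - φ a‖ ≤ B / μ * L * ‖φ a‖ * (t - a) := by
  have hGσ : ∀ t ∈ Icc a b, G (σ t) ≠ 0 := fun t ht ↦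
    norm_pos_iff.1 (norm_map_pos hG hμ (hsphere t ht))
  refine norm_image_sub_le_of_norm_deriv_le_segment' (fun t ht ↦ (hdφ t ht).hasDerivWithinAt)
    fun t ht ↦ ?_
  have ht := Ico_subset_Icc_self ht
  have hB0 : 0 ≤ B := (norm_nonneg _).trans (hB t ht)
  calc ‖φ' t‖ ≤ ‖σ t‖ / μ * ‖ι (σ' t)‖ * ‖φ t‖ :=
        norm_transport_velocity_le hι1 hG hμ (hsphere t ht) (hode t ht)
    _ ≤ B / μ * L * ‖φ a‖ := by
        rw [norm_transport_eq hG hdσ hdφ hode hGσ htan t ht]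
        gcongr
        exacts [hB t ht, hL t ht]

end ParallelTransport

theorem parallel_transport_displacement_general
    {E H : Type*} [NormedAddCommGroup E] [InnerProductSpace ℝ E]
    [NormedAddCommGroup H] [InnerProductSpace ℝ H]
    (ι : E →L[ℝ] H) (hι1 : ‖(ι : E →L[ℝ] H)‖ ≤ 1)
    (μ : ℝ) (hμ : 0 < μ)
    (R : ℝ)
    (G : E →ₗ[ℝ] E) (hG : ∀ a h : E, ⟪ι a, ι h⟫ = ⟪G a, h⟫)
    (u₀ u w₀ : E) (hu₀S : ‖ι u₀‖ ^ 2 = μ) (hu₀R : ‖u₀‖ < R - 1)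
    (huS : ‖ι u‖ ^ 2 = μ) (hdist : ‖u - u₀‖ < min 1 (Real.sqrt μ))
    (htan : ⟪ι u₀, ι w₀⟫ = 0)
    (σ σ' φ φ' : ℝ → E)
    (hσ : ∀ t : ℝ, σ t =
      Real.cos (‖ι (expinv ι μ u₀ u)‖ / Real.sqrt μ * t) • u₀ +
        (t * sinc (‖ι (expinv ι μ u₀ u)‖ / Real.sqrt μ * t)) • expinv ι μ u₀ u)
    (hdσ : ∀ t : ℝ, HasDerivAt σ (σ' t) t)
    (hdφ : ∀ t ∈ Set.Icc (0:ℝ) 1, HasDerivAt φ (φ' t) t)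
    (hode : ∀ t ∈ Set.Icc (0:ℝ) 1,
      φ' t + (⟪ι (φ t), ι (σ' t)⟫ / ‖G (σ t)‖ ^ 2) • G (σ t) = 0)
    (hφ0 : φ 0 = w₀) :
    ‖φ 1 - w₀‖ ≤ (1 / μ) * (R + (R - 1) / Real.sqrt μ) * ‖ι (expinv ι μ u₀ u)‖ * ‖w₀‖ := by
  obtain rfl : σ = sphereGeodesic ι μ u₀ (expinv ι μ u₀ u) := funext hσ
  subst hφ0
  have hdistH : ‖ι u - ι u₀‖ < min 1 √μ := by
    rw [← map_sub]
    exact (ι.le_of_opNorm_le hι1 (u - u₀)).trans_lt (by rwa [one_mul])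
  have hβ := inner_div_nonneg_of_norm_sub_le hμ huS hu₀S (hdistH.le.trans (min_le_right _ _))
  have hβ' := one_sub_inner_div_mul_sqrt_le hμ huS hu₀S (hdistH.le.trans (min_le_left _ _))
    (hdistH.le.trans (min_le_right _ _))
  have hbound : ∀ t ∈ Icc (0:ℝ) 1,
      ‖sphereGeodesic ι μ u₀ (expinv ι μ u₀ u) t‖ ≤ R + (R - 1) / √μ := by
    intro t ht
    have hfar : (1 - ⟪ι u, ι u₀⟫ / μ) * ‖u₀‖ ≤ (R - 1) / √μ := by
      rw [le_div_iff₀ (Real.sqrt_pos.2 hμ)]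
      nlinarith [norm_nonneg u₀]
    linarith [norm_sphereGeodesic_expinv_le ι hμ hu₀S huS hβ ht, hdist.trans_le (min_le_left _ _)]
  have hspeed : ∀ t ∈ Icc (0:ℝ) 1, ‖ι (σ' t)‖ ≤ ‖ι (expinv ι μ u₀ u)‖ := fun t _ ↦ by
    rw [(hdσ t).unique (hasDerivAt_sphereGeodesic ι t),
      norm_sphereGeodesic_deriv ι hμ hu₀S (inner_expinv_eq_zero ι hμ.ne' hu₀S)]
  refine (norm_sub_le_of_transport hι1 hG hμ (fun t _ ↦ hdσ t) hdφ hode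
    (fun t _ ↦ norm_sq_sphereGeodesic ι hμ hu₀S (inner_expinv_eq_zero ι hμ.ne' hu₀S) t)
    (by rwa [sphereGeodesic_zero]) hspeed hbound 1 (right_mem_Icc.2 zero_le_one)).trans_eq ?_
  ring

/-- Lemma on the displacement of parallel transport: with
`u₀ ∈ S_μ ∩ B(0,R−1)`, `R > 1`, `u ∈ S_μ`, `‖u − u₀‖ < δ₀ = min(1,√μ)`,
`v = exp_{u₀}⁻¹(u)`, `σ(t) = exp_{u₀}(tv) = cos(ωt)u₀ + t·sinc(ωt)v` with `ω = |v|/√μ`,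
and `φ` solving the parallel transport equation
`φ' + ((φ,σ')_H/‖Gσ‖²)Gσ = 0`, `φ(0) = w₀ ∈ T_{u₀}S_μ`, one has
`‖φ(1) − w₀‖ ≤ C(R,μ)·|v|·‖w₀‖` where `C(R,μ) = (1/μ)(R + (R−1)/√μ)`. -/
theorem parallel_transport_displacement
    {E H : Type*} [NormedAddCommGroup E] [InnerProductSpace ℝ E] [CompleteSpace E]
    [NormedAddCommGroup H] [InnerProductSpace ℝ H] [CompleteSpace H]
    (ι : E →L[ℝ] H) (hι : Function.Injective ι) (hι1 : ‖(ι : E →L[ℝ] H)‖ ≤ 1)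
    (μ : ℝ) (hμ : 0 < μ)
    (R : ℝ) (hR : 1 < R)
    (G : E →ₗ[ℝ] E) (hG : ∀ a h : E, ⟪ι a, ι h⟫ = ⟪G a, h⟫)
    (u₀ u w₀ : E) (hu₀S : ‖ι u₀‖ ^ 2 = μ) (hu₀R : ‖u₀‖ < R - 1)
    (huS : ‖ι u‖ ^ 2 = μ) (hdist : ‖u - u₀‖ < min 1 (Real.sqrt μ))
    (htan : ⟪ι u₀, ι w₀⟫ = 0)
    (σ σ' φ φ' : ℝ → E)
    (hσ : ∀ t : ℝ, σ t =
      Real.cos (‖ι (expinv ι μ u₀ u)‖ / Real.sqrt μ * t) • u₀ +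
        (t * sinc (‖ι (expinv ι μ u₀ u)‖ / Real.sqrt μ * t)) • expinv ι μ u₀ u)
    (hdσ : ∀ t : ℝ, HasDerivAt σ (σ' t) t)
    (hdφ : ∀ t ∈ Set.Icc (0:ℝ) 1, HasDerivAt φ (φ' t) t)
    (hode : ∀ t ∈ Set.Icc (0:ℝ) 1,
      φ' t + (⟪ι (φ t), ι (σ' t)⟫ / ‖G (σ t)‖ ^ 2) • G (σ t) = 0)
    (hφ0 : φ 0 = w₀) :
    ‖φ 1 - w₀‖ ≤ (1 / μ) * (R + (R - 1) / Real.sqrt μ) * ‖ι (expinv ι μ u₀ u)‖ * ‖w₀‖ :=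
  parallel_transport_displacement_general ι hι1 μ hμ R G hG u₀ u w₀ hu₀S hu₀R huS hdist htan σ σ' φ
    φ' hσ hdσ hdφ hode hφ0
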